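/- The second derived subgroup of the weak commutativity group χ(G) satisfies χ(G)^(2) = D' ⊔ L₁' ⊔ L₂' ⊔ L₁₂, the join of the derived subgroups of D, L₁, L₂ together with L₁₂. -/

import Mathlib

/-!
In `χ(G)` every `g` commutes with `g^φ`. Expanding this relation for a product `ab` shows that
conjugation by `λ_a = a⁻¹a^φ` carries `⁅b, a^φ⁆` to `⁅b^φ, a⁆`; playing these identities against
each other shows that `D = ⁅G₁, G₂⁆` centralizes `L`. This makes `L₁` and `L₂` normal, like `D`
and `L`, and since `g = g^φ λ_g⁻¹` and `g^φ = g λ_g`, modulo `D L₁ L₂` the subgroups `G₁` and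
`G₂` commute with each other and with themselves, so `χ(G)' = D L₁ L₂`. Commutators of products
of normal subgroups expand into the pairwise commutators, and `⁅D, L₁⁆ = ⁅D, L₂⁆ = 1` because
`L₁, L₂ ≤ L`.
-/

open Subgroup

/-- The weak commutativity relations inside the free product `G ∗ G`. -/
def chiRel (G : Type*) [Group G] : Subgroup (Monoid.Coprod G G) :=
  Subgroup.normalClosure
    {x | ∃ g : G, x = Monoid.Coprod.inl g * Monoid.Coprod.inr g *
      (Monoid.Coprod.inl g)⁻¹ * (Monoid.Coprod.inr g)⁻¹}

instance chiRel_normal (G : Type*) [Group G] : (chiRel G).Normal :=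
  Subgroup.normalClosure_normal

/-- The weak commutativity group `χ(G)`. -/
def Chi (G : Type*) [Group G] : Type _ := Monoid.Coprod G G ⧸ chiRel G

instance (G : Type*) [Group G] : Group (Chi G) :=
  inferInstanceAs (Group (Monoid.Coprod G G ⧸ chiRel G))

/-- The canonical map `G → χ(G)`, `g ↦ g`. -/
def chiIota1 (G : Type*) [Group G] : G →* Chi G :=
  (QuotientGroup.mk' (chiRel G)).comp Monoid.Coprod.inl

/-- The canonical map `G → χ(G)`, `g ↦ g^φ`. -/
def chiIota2 (G : Type*) [Group G] : G →* Chi G :=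
  (QuotientGroup.mk' (chiRel G)).comp Monoid.Coprod.inr

/-- `G₁ ≤ χ(G)`. -/
def chiG1 (G : Type*) [Group G] : Subgroup (Chi G) := (chiIota1 G).range

/-- `G₂ = G^φ ≤ χ(G)`. -/
def chiG2 (G : Type*) [Group G] : Subgroup (Chi G) := (chiIota2 G).range

/-- `L = ⟨g⁻¹ g^φ : g ∈ G⟩`. -/
def chiL (G : Type*) [Group G] : Subgroup (Chi G) :=
  Subgroup.closure {x | ∃ g : G, x = (chiIota1 G g)⁻¹ * chiIota2 G g}

/-- `D = ⁅G₁, G₂⁆`. -/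
def chiD (G : Type*) [Group G] : Subgroup (Chi G) := ⁅chiG1 G, chiG2 G⁆

/-- `L₁ = ⁅L, G₁⁆`. -/
def chiL1 (G : Type*) [Group G] : Subgroup (Chi G) := ⁅chiL G, chiG1 G⁆

/-- `L₂ = ⁅L, G₂⁆`. -/
def chiL2 (G : Type*) [Group G] : Subgroup (Chi G) := ⁅chiL G, chiG2 G⁆

/-- `R = ⁅⁅G₁, L⁆, G₂⁆`. -/
def chiR (G : Type*) [Group G] : Subgroup (Chi G) := ⁅⁅chiG1 G, chiL G⁆, chiG2 G⁆

/-- `L₁₂ = ⁅L₁, L₂⁆`. -/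
def chiL12 (G : Type*) [Group G] : Subgroup (Chi G) := ⁅chiL1 G, chiL2 G⁆


open scoped commutatorElement

theorem commute_inv_mul_of_conj_eq {G : Type*} [Group G] {x p q : G}
    (h : p * x * p⁻¹ = q * x * q⁻¹) : Commute x (q⁻¹ * p) :=
  calc x * (q⁻¹ * p) = q⁻¹ * (q * x * q⁻¹) * p := by group
    _ = q⁻¹ * (p * x * p⁻¹) * p := by rw [h]
    _ = q⁻¹ * p * x := by group

namespace MonoidHom

variable {G H : Type*} [Group G] [Group H] {i j : G →* H}

theorem commutatorElement_swap_eq_conj (hij : ∀ g, Commute (i g) (j g)) (a b : G) :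
    ⁅j b, i a⁆ = ((i a)⁻¹ * j a)⁻¹ * ⁅i b, j a⁆ * ((i a)⁻¹ * j a) := by
  have hab : i a * i b * (j a * j b) = j a * j b * (i a * i b) := by
    simpa using (hij (a * b)).eq
  have hb : i b * (j b)⁻¹ = (j b)⁻¹ * i b := (hij b).inv_right.eq
  have ha : (i a)⁻¹ * j a = j a * (i a)⁻¹ := (hij a).inv_left.eq
  have key : i a * i b * j a * (i b)⁻¹ = j a * j b * i a * (j b)⁻¹ :=
    calc i a * i b * j a * (i b)⁻¹
      _ = i a * i b * (j a * j b) * ((j b)⁻¹ * (i b)⁻¹) := by group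
      _ = j a * j b * i a * (i b * (j b)⁻¹) * (i b)⁻¹ := by rw [hab]; group
      _ = j a * j b * i a * (j b)⁻¹ := by rw [hb]; group
  calc ⁅j b, i a⁆ = (j a)⁻¹ * (j a * j b * i a * (j b)⁻¹) * (i a)⁻¹ := by
        rw [commutatorElement_def]; group
    _ = (j a)⁻¹ * (i a * i b * j a * (i b)⁻¹) * (i a)⁻¹ := by rw [key]
    _ = ((i a)⁻¹ * j a)⁻¹ * ⁅i b, j a⁆ * (j a * (i a)⁻¹) := by
        rw [commutatorElement_def]; group
    _ = _ := by rw [← ha]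

theorem commute_commutatorElement_inv_mul_mul_inv_mul (hij : ∀ g, Commute (i g) (j g))
    (a b c : G) :
    Commute ⁅i c, j a⁆ ((i b)⁻¹ * ((i a)⁻¹ * j a) * j b * ((i a)⁻¹ * j a)⁻¹) := by
  set l := (i a)⁻¹ * j a
  have swap := commutatorElement_swap_eq_conj hij a
  have h : j b * l⁻¹ * ⁅i c, j a⁆ * (j b * l⁻¹)⁻¹ = l⁻¹ * i b * ⁅i c, j a⁆ * (l⁻¹ * i b)⁻¹ :=
    calc j b * l⁻¹ * ⁅i c, j a⁆ * (j b * l⁻¹)⁻¹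
      _ = j b * (l⁻¹ * ⁅i c, j a⁆ * l) * (j b)⁻¹ := by group
      _ = ⁅j (b * c), i a⁆ * ⁅j b, i a⁆⁻¹ := by
          rw [← swap]; simp only [map_mul, commutatorElement_def]; group
      _ = l⁻¹ * ⁅i (b * c), j a⁆ * l * (l⁻¹ * ⁅i b, j a⁆ * l)⁻¹ := by rw [swap, swap]
      _ = l⁻¹ * i b * ⁅i c, j a⁆ * (l⁻¹ * i b)⁻¹ := by
          simp only [map_mul, commutatorElement_def]; group
  simpa [mul_assoc] using commute_inv_mul_of_conj_eq h

/-- With `λ = (i a)⁻¹ * j a`, the element `(i b)⁻¹ * j b` factors as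
`((i b)⁻¹ * λ⁻¹ * i b) * ((i b)⁻¹ * λ * j b)`, and both factors centralize `⁅i d, j a⁆`. -/
theorem commute_commutatorElement_inv_mul (hij : ∀ g, Commute (i g) (j g)) (a b d : G) :
    Commute ⁅i d, j a⁆ ((i b)⁻¹ * j b) := by
  have hl : ∀ c, Commute ⁅i c, j a⁆ ((i a)⁻¹ * j a) := fun c ↦ by
    have h := commute_commutatorElement_inv_mul_mul_inv_mul hij a a c
    rwa [show (i a)⁻¹ * ((i a)⁻¹ * j a) * j a * ((i a)⁻¹ * j a)⁻¹
      = (i a)⁻¹ * ((i a)⁻¹ * (j a * i a)) by group, ← (hij a).eq,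
      show (i a)⁻¹ * ((i a)⁻¹ * (i a * j a)) = (i a)⁻¹ * j a by group] at h
  have hlj : ∀ b c, Commute ⁅i c, j a⁆ ((i b)⁻¹ * ((i a)⁻¹ * j a) * j b) := fun b c ↦ by
    simpa only [inv_mul_cancel_right] using
      (commute_commutatorElement_inv_mul_mul_inv_mul hij a b c).mul_right (hl c)
  have hli : ∀ c d, Commute ⁅i d, j a⁆ ((i c)⁻¹ * ((i a)⁻¹ * j a) * i c) := fun c d ↦ by
    have h := (hl (c * d)).mul_left (hl c).inv_left
    rw [map_mul, commutatorElement_mul_left_eq_conj_mul, mul_inv_cancel_right] at h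
    rw [← Commute.conj_iff (i c)]
    simpa only [mul_assoc, mul_inv_cancel_left, mul_inv_cancel, mul_one] using h
  simpa only [mul_inv_rev, inv_inv, mul_assoc, inv_mul_cancel_left, mul_inv_cancel_left] using
    (hli b d).inv_right.mul_right (hlj b d)

end MonoidHom

namespace Subgroup

variable {G : Type*} [Group G]

theorem commutator_le_iff_le_comap_centralizer {H K M : Subgroup G} [M.Normal] :
    ⁅H, K⁆ ≤ M ↔
      H ≤ (centralizer (K.map (QuotientGroup.mk' M))).comap (QuotientGroup.mk' M) := by
  rw [← map_le_iff_le_comap, ← commutator_eq_bot_iff_le_centralizer, ← map_commutator,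
    map_eq_bot_iff, QuotientGroup.ker_mk']

theorem commutator_sup_left_le_iff {H₁ H₂ K M : Subgroup G} [M.Normal] :
    ⁅H₁ ⊔ H₂, K⁆ ≤ M ↔ ⁅H₁, K⁆ ≤ M ∧ ⁅H₂, K⁆ ≤ M := by
  simp only [commutator_le_iff_le_comap_centralizer, sup_le_iff]

theorem commutator_sup_right_le_iff {H K₁ K₂ M : Subgroup G} [M.Normal] :
    ⁅H, K₁ ⊔ K₂⁆ ≤ M ↔ ⁅H, K₁⁆ ≤ M ∧ ⁅H, K₂⁆ ≤ M := by
  rw [commutator_comm, commutator_sup_left_le_iff, commutator_comm K₁, commutator_comm K₂]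

theorem commutator_sup_sup_self (A B C : Subgroup G) [A.Normal] [B.Normal] [C.Normal] :
    ⁅A ⊔ B ⊔ C, A ⊔ B ⊔ C⁆ = ⁅A, A⁆ ⊔ ⁅B, B⁆ ⊔ ⁅C, C⁆ ⊔ ⁅A, B⁆ ⊔ ⁅A, C⁆ ⊔ ⁅B, C⁆ := by
  apply le_antisymm
  · simp only [commutator_sup_left_le_iff, commutator_sup_right_le_iff]
    rw [commutator_comm B A, commutator_comm C A, commutator_comm C B]
    repeat' apply And.intro
    all_goals order
  · simp only [sup_le_iff]
    refine ⟨⟨⟨⟨⟨?_, ?_⟩, ?_⟩, ?_⟩, ?_⟩, ?_⟩ <;> apply commutator_mono <;> order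

theorem normal_of_le_normalizer_of_sup_eq_top {A B N : Subgroup G} (hAB : A ⊔ B = ⊤)
    (hA : A ≤ normalizer (N : Set G)) (hB : B ≤ normalizer (N : Set G)) : N.Normal :=
  normalizer_eq_top_iff.mp (top_le_iff.mp (hAB ▸ sup_le hA hB))

theorem inf_normalizer_le_normalizer_commutator (H K : Subgroup G) :
    normalizer (H : Set G) ⊓ normalizer (K : Set G) ≤
      normalizer ((⁅H, K⁆ : Subgroup G) : Set G) := by
  rw [commutator_def, le_normalizer_closure_iff]
  rintro g ⟨hgH, hgK⟩ _ ⟨h, hh, k, hk, rfl⟩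
  exact subset_closure ⟨g * h * g⁻¹, (hgH h).mp hh, g * k * g⁻¹, (hgK k).mp hk, by
    simp only [commutatorElement_def]; group⟩

theorem le_normalizer_commutator_of_normal (N A : Subgroup G) [N.Normal] :
    A ≤ normalizer ((⁅N, A⁆ : Subgroup G) : Set G) :=
  (le_inf le_normalizer_of_normal le_normalizer).trans
    (inf_normalizer_le_normalizer_commutator N A)

theorem le_normalizer_commutator_of_commutator_eq_bot {N A B : Subgroup G} [hN : N.Normal]
    (h : ⁅N, ⁅A, B⁆⁆ = ⊥) : B ≤ normalizer ((⁅N, A⁆ : Subgroup G) : Set G) := by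
  rw [commutator_comm, commutator_eq_bot_iff_le_centralizer] at h
  rw [commutator_def N A, le_normalizer_closure_iff]
  rintro b hb _ ⟨n, hn, a, ha, rfl⟩
  have hd : ⁅b, a⁆ ∈ centralizer (N : Set G) :=
    h (commutator_comm B A ▸ commutator_mem_commutator hb ha)
  have hn' : b * n * b⁻¹ ∈ N := hN.conj_mem n hn b
  have hna : ⁅b * n * b⁻¹, a⁆ ∈ N :=
    commutator_le_left N A (commutator_mem_commutator hn' ha)
  refine subset_closure ⟨_, hn', a, ha, ?_⟩
  calc ⁅b * n * b⁻¹, a⁆ = ⁅b, a⁆ * ⁅b * n * b⁻¹, a⁆ * ⁅b, a⁆⁻¹ := by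
        rw [← mem_centralizer_iff.mp hd _ hna, mul_inv_cancel_right]
    _ = ⁅b * n * b⁻¹, ⁅b, a⁆ * a⁆ := by
        rw [commutatorElement_mul_right_eq_mul_conj,
          commutatorElement_eq_one_iff_commute.mpr (mem_centralizer_iff.mp hd _ hn'), one_mul]
    _ = b * ⁅n, a⁆ * b⁻¹ := by simp only [commutatorElement_def]; group

end Subgroup

section Chi

variable (G : Type*) [Group G]

theorem chiIota1_commute_chiIota2 (g : G) : Commute (chiIota1 G g) (chiIota2 G g) := by
  rw [← commutatorElement_eq_one_iff_commute]
  have h : ⁅chiIota1 G g, chiIota2 G g⁆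
      = QuotientGroup.mk' (chiRel G) ⁅Monoid.Coprod.inl g, Monoid.Coprod.inr g⁆ :=
    (map_commutatorElement (QuotientGroup.mk' (chiRel G)) _ _).symm
  rw [h, QuotientGroup.mk'_apply]
  exact (QuotientGroup.eq_one_iff _).mpr (subset_normalClosure ⟨g, commutatorElement_def _ _⟩)

theorem chiG1_sup_chiG2 : chiG1 G ⊔ chiG2 G = ⊤ := by
  change ((QuotientGroup.mk' (chiRel G)).comp (Monoid.Coprod.inl (M := G) (N := G))).range ⊔
    ((QuotientGroup.mk' (chiRel G)).comp (Monoid.Coprod.inr (M := G) (N := G))).range =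
    (⊤ : Subgroup (Monoid.Coprod G G ⧸ chiRel G))
  rw [← MonoidHom.map_range, ← MonoidHom.map_range, ← Subgroup.map_sup,
    Monoid.Coprod.range_inl_sup_range_inr, ← MonoidHom.range_eq_map]
  exact MonoidHom.range_eq_top_of_surjective _ (QuotientGroup.mk'_surjective _)

theorem inv_mul_mem_chiL (g : G) : (chiIota1 G g)⁻¹ * chiIota2 G g ∈ chiL G :=
  subset_closure ⟨g, rfl⟩

theorem chiG1_le_chiG2_sup_chiL : chiG1 G ≤ chiG2 G ⊔ chiL G := by
  rintro _ ⟨g, rfl⟩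
  rw [show chiIota1 G g = chiIota2 G g * ((chiIota1 G g)⁻¹ * chiIota2 G g)⁻¹ by group]
  exact mul_mem (mem_sup_left ⟨g, rfl⟩) (mem_sup_right (inv_mem (inv_mul_mem_chiL G g)))

theorem chiG2_le_chiG1_sup_chiL : chiG2 G ≤ chiG1 G ⊔ chiL G := by
  rintro _ ⟨g, rfl⟩
  rw [show chiIota2 G g = chiIota1 G g * ((chiIota1 G g)⁻¹ * chiIota2 G g) by group]
  exact mul_mem (mem_sup_left ⟨g, rfl⟩) (mem_sup_right (inv_mul_mem_chiL G g))

theorem commutator_chiD_chiL_eq_bot : ⁅chiD G, chiL G⁆ = ⊥ := by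
  rw [commutator_eq_bot_iff_le_centralizer, chiD, commutator_le]
  rintro _ ⟨a, rfl⟩ _ ⟨b, rfl⟩
  rw [chiL, centralizer_closure, mem_centralizer_iff]
  rintro _ ⟨c, rfl⟩
  exact (MonoidHom.commute_commutatorElement_inv_mul (chiIota1_commute_chiIota2 G) b c a).symm

theorem commutator_chiD_eq_bot_of_le_chiL {K : Subgroup (Chi G)} (hK : K ≤ chiL G) :
    ⁅chiD G, K⁆ = ⊥ :=
  eq_bot_iff.mpr ((commutator_mono le_rfl hK).trans (commutator_chiD_chiL_eq_bot G).le)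

instance chiL_normal : (chiL G).Normal := by
  refine normal_of_le_normalizer_of_sup_eq_top (chiG1_sup_chiG2 G) ?_ ?_ <;>
    rw [chiL, le_normalizer_closure_iff] <;> rintro _ ⟨h, rfl⟩ _ ⟨g, rfl⟩
  · rw [show chiIota1 G h * ((chiIota1 G g)⁻¹ * chiIota2 G g) * (chiIota1 G h)⁻¹
        = ((chiIota1 G (g * h⁻¹))⁻¹ * chiIota2 G (g * h⁻¹))
          * ((chiIota1 G h⁻¹)⁻¹ * chiIota2 G h⁻¹)⁻¹ by
        simp only [map_mul, map_inv]; group]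
    exact mul_mem (inv_mul_mem_chiL G _) (inv_mem (inv_mul_mem_chiL G _))
  · rw [show chiIota2 G h * ((chiIota1 G g)⁻¹ * chiIota2 G g) * (chiIota2 G h)⁻¹
        = ((chiIota1 G h⁻¹)⁻¹ * chiIota2 G h⁻¹)⁻¹
          * ((chiIota1 G (g * h⁻¹))⁻¹ * chiIota2 G (g * h⁻¹)) by
        simp only [map_mul, map_inv]; group]
    exact mul_mem (inv_mem (inv_mul_mem_chiL G _)) (inv_mul_mem_chiL G _)

theorem chiL1_le_chiL : chiL1 G ≤ chiL G := commutator_le_left _ _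

theorem chiL2_le_chiL : chiL2 G ≤ chiL G := commutator_le_left _ _

instance chiD_normal : (chiD G).Normal :=
  normal_of_le_normalizer_of_sup_eq_top (chiG1_sup_chiG2 G)
    (normalizer_commutator_ge_left _ _) (normalizer_commutator_ge_right _ _)

instance chiL1_normal : (chiL1 G).Normal :=
  normal_of_le_normalizer_of_sup_eq_top (chiG1_sup_chiG2 G)
    (le_normalizer_commutator_of_normal _ _)
    (le_normalizer_commutator_of_commutator_eq_bot
      (by rw [commutator_comm]; exact commutator_chiD_chiL_eq_bot G))

instance chiL2_normal : (chiL2 G).Normal :=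
  normal_of_le_normalizer_of_sup_eq_top (chiG1_sup_chiG2 G)
    (le_normalizer_commutator_of_commutator_eq_bot
      (by rw [commutator_comm, commutator_comm (chiG2 G)]; exact commutator_chiD_chiL_eq_bot G))
    (le_normalizer_commutator_of_normal _ _)

theorem commutator_chi : commutator (Chi G) = chiD G ⊔ chiL1 G ⊔ chiL2 G := by
  rw [commutator_def]
  refine le_antisymm ?_ (sup_le (sup_le ?_ ?_) ?_)
  · have hD : chiD G ≤ chiD G ⊔ chiL1 G ⊔ chiL2 G := le_sup_left.trans le_sup_left
    have hD' : ⁅chiG2 G, chiG1 G⁆ ≤ chiD G ⊔ chiL1 G ⊔ chiL2 G := by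
      rw [commutator_comm]; exact hD
    have hL1 : ⁅chiG1 G, chiL G⁆ ≤ chiD G ⊔ chiL1 G ⊔ chiL2 G := by
      rw [commutator_comm]; exact le_sup_right.trans le_sup_left
    have hL2 : ⁅chiG2 G, chiL G⁆ ≤ chiD G ⊔ chiL1 G ⊔ chiL2 G := by
      rw [commutator_comm]; exact le_sup_right
    rw [← chiG1_sup_chiG2 G]
    simp only [commutator_sup_left_le_iff, commutator_sup_right_le_iff]
    refine ⟨⟨?_, hD'⟩, hD, ?_⟩
    · exact (commutator_mono le_rfl (chiG1_le_chiG2_sup_chiL G)).trans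
        (commutator_sup_right_le_iff.mpr ⟨hD, hL1⟩)
    · exact (commutator_mono le_rfl (chiG2_le_chiG1_sup_chiL G)).trans
        (commutator_sup_right_le_iff.mpr ⟨hD', hL2⟩)
  all_goals exact commutator_mono le_top le_top

end Chi

theorem chi_second_derived (G : Type*) [Group G] :
    derivedSeries (Chi G) 2 =
      ⁅chiD G, chiD G⁆ ⊔ ⁅chiL1 G, chiL1 G⁆ ⊔ ⁅chiL2 G, chiL2 G⁆ ⊔ chiL12 G := by
  rw [derivedSeries_succ, derivedSeries_one, commutator_chi, commutator_sup_sup_self,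
    commutator_chiD_eq_bot_of_le_chiL G (chiL1_le_chiL G),
    commutator_chiD_eq_bot_of_le_chiL G (chiL2_le_chiL G), sup_bot_eq, sup_bot_eq, chiL12]
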